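/- arXiv:2103.02073 — 7 statements merged into one kernel-verified Lean document; each statement's English description precedes it below -/
import Mathlib

section
/- Suppose two purified H-channels [U, ε, E] and [U', ε', E'] have equal second-level superoperators, i.e., Tr_E(U⁽²⁾(σ ⊗ |ε⟩⟨ε|)U⁽²⁾†) = Tr_{E'}(U'⁽²⁾(σ ⊗ |ε'⟩⟨ε'|)U'⁽²⁾†) for all σ ∈ L(H ⊗ H). Then they have equal first-level superoperators: Tr_E(U(ρ ⊗ |ε⟩⟨ε|)U†) = Tr_{E'}(U'(ρ ⊗ |ε'⟩⟨ε'|)U'†) for all ρ ∈ L(H). -/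
open Matrix Kronecker BigOperators

noncomputable section

/-- Partial trace over the environment factor `e`. -/
def ptrace {n e : Type*} [Fintype e] (M : Matrix (n × e) (n × e) ℂ) : Matrix n n ℂ :=
  Matrix.of fun i j => ∑ k, M (i, k) (j, k)

/-- The rank-one projector `|ε⟩⟨ε|`. -/
def vecProj {e : Type*} (ε : e → ℂ) : Matrix e e ℂ :=
  Matrix.of fun i j => ε i * star (ε j)

/-- The isometric embedding `I_H ⊗ |ε⟩ : H → H ⊗ E`. -/
def inj {n e : Type*} [DecidableEq n] (ε : e → ℂ) : Matrix (n × e) n ℂ :=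
  Matrix.of fun p j => if p.1 = j then ε p.2 else 0

/-- First-level superoperator `ρ ↦ Tr_E (U (ρ ⊗ |ε⟩⟨ε|) U†)`. -/
def S1 {n e : Type*} [Fintype n] [Fintype e] (U : Matrix (n × e) (n × e) ℂ) (ε : e → ℂ)
    (ρ : Matrix n n ℂ) : Matrix n n ℂ :=
  ptrace (U * (ρ ⊗ₖ vecProj ε) * Uᴴ)

/-- First-level transformation matrix `(I_H ⊗ ⟨ε|) U (I_H ⊗ |ε⟩)`. -/
def T1 {n e : Type*} [Fintype n] [Fintype e] [DecidableEq n]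
    (U : Matrix (n × e) (n × e) ℂ) (ε : e → ℂ) : Matrix n n ℂ :=
  (inj (n := n) ε)ᴴ * U * inj ε

/-- `I_H ⊗ U` viewed as an operator on `(H ⊗ H) ⊗ E`. -/
def idT {n e : Type*} [DecidableEq n] (U : Matrix (n × e) (n × e) ℂ) :
    Matrix ((n × n) × e) ((n × n) × e) ℂ :=
  Matrix.of fun p q => if p.1.1 = q.1.1 then U (p.1.2, p.2) (q.1.2, q.2) else 0

/-- The swap operator `𝔖` on `H ⊗ H`. -/
def swapM (n : Type*) [DecidableEq n] : Matrix (n × n) (n × n) ℂ :=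
  Matrix.of fun p q => if p.1 = q.2 ∧ p.2 = q.1 then 1 else 0

/-- `U⁽²⁾ := (I_H ⊗ U)(𝔖 ⊗ I_E)(I_H ⊗ U)`. -/
def U2m {n e : Type*} [Fintype n] [Fintype e] [DecidableEq n] [DecidableEq e]
    (U : Matrix (n × e) (n × e) ℂ) : Matrix ((n × n) × e) ((n × n) × e) ℂ :=
  idT U * (swapM n ⊗ₖ (1 : Matrix e e ℂ)) * idT U

/-- Second-level superoperator. -/
def S2 {n e : Type*} [Fintype n] [Fintype e] [DecidableEq n] [DecidableEq e]
    (U : Matrix (n × e) (n × e) ℂ) (ε : e → ℂ)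
    (σ : Matrix (n × n) (n × n) ℂ) : Matrix (n × n) (n × n) ℂ :=
  ptrace (U2m U * (σ ⊗ₖ vecProj ε) * (U2m U)ᴴ)

/-- Second-level transformation matrix. -/
def T2 {n e : Type*} [Fintype n] [Fintype e] [DecidableEq n] [DecidableEq e]
    (U : Matrix (n × e) (n × e) ℂ) (ε : e → ℂ) : Matrix (n × n) (n × n) ℂ :=
  (inj (n := n × n) ε)ᴴ * U2m U * inj ε

/-!
Tracing the second copy of `H` out of `S²(ρ₁ ⊗ ρ)` leaves `Tr ρ₁ • S¹(ρ)`. Indeed, the outer factor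
`I ⊗ U` of `U⁽²⁾` acts only on the systems that are traced out, so it drops out by unitarity; the
swap then moves `ρ` to where the inner `I ⊗ U` acts, and tracing out the first copy of `H`
contributes `Tr ρ₁`. With `ρ₁` of trace one, `S¹` is thus a function of `S²`.
-/

section PartialTrace

variable {n m e : Type*} [Fintype m] [Fintype e]

def blockAt (X : Matrix ((n × m) × e) ((n × m) × e) ℂ) (i j : n) : Matrix (m × e) (m × e) ℂ :=
  of fun p q => X ((i, p.1), p.2) ((j, q.1), q.2)

lemma ptrace_ptrace_apply (X : Matrix ((n × m) × e) ((n × m) × e) ℂ) (i j : n) :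
    ptrace (ptrace X) i j = trace (blockAt X i j) := by
  simp [ptrace, blockAt, trace, Fintype.sum_prod_type]

variable [Fintype n] [DecidableEq n]

lemma blockAt_idT_mul_mul_conjTranspose (U : Matrix (n × e) (n × e) ℂ)
    (X : Matrix ((n × n) × e) ((n × n) × e) ℂ) (i j : n) :
    blockAt (idT U * X * (idT U)ᴴ) i j = U * blockAt X i j * Uᴴ := by
  ext p q
  simp [blockAt, idT, mul_apply, Fintype.sum_prod_type, apply_ite (starRingEnd ℂ), mul_ite]

lemma ptrace_ptrace_idT_conj [DecidableEq e] {U : Matrix (n × e) (n × e) ℂ} (hU : Uᴴ * U = 1)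
    (X : Matrix ((n × n) × e) ((n × n) × e) ℂ) :
    ptrace (ptrace (idT U * X * (idT U)ᴴ)) = ptrace (ptrace X) := by
  ext i j
  rw [ptrace_ptrace_apply, ptrace_ptrace_apply, blockAt_idT_mul_mul_conjTranspose,
    trace_mul_cycle, hU, Matrix.one_mul]

lemma swapM_kronecker_one_conj [DecidableEq e] (X : Matrix ((n × n) × e) ((n × n) × e) ℂ) :
    (swapM n ⊗ₖ (1 : Matrix e e ℂ)) * X * (swapM n ⊗ₖ (1 : Matrix e e ℂ))ᴴ =
      X.submatrix (fun p => ((p.1.2, p.1.1), p.2)) (fun p => ((p.1.2, p.1.1), p.2)) := by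
  ext p q
  simp [swapM, mul_apply, one_apply, Fintype.sum_prod_type, ite_and, apply_ite (starRingEnd ℂ),
    mul_ite]

lemma idT_mul_kronecker_mul_conjTranspose_apply (U : Matrix (n × e) (n × e) ℂ)
    (A B : Matrix n n ℂ) (C : Matrix e e ℂ) (a b i j : n) (k l : e) :
    (idT U * ((A ⊗ₖ B) ⊗ₖ C) * (idT U)ᴴ) ((a, i), k) ((b, j), l) =
      A a b * (U * (B ⊗ₖ C) * Uᴴ) (i, k) (j, l) := by
  simp [idT, mul_apply, Fintype.sum_prod_type, apply_ite (starRingEnd ℂ), mul_ite, ite_mul,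
    Finset.mul_sum, Finset.sum_mul, mul_assoc, mul_left_comm]

end PartialTrace

section Superoperators

variable {n e : Type*} [Fintype n] [DecidableEq n] [Fintype e] [DecidableEq e]

lemma U2m_conj_eq (U : Matrix (n × e) (n × e) ℂ) (X : Matrix ((n × n) × e) ((n × n) × e) ℂ) :
    U2m U * X * (U2m U)ᴴ =
      idT U * ((swapM n ⊗ₖ (1 : Matrix e e ℂ)) * (idT U * X * (idT U)ᴴ) *
        (swapM n ⊗ₖ (1 : Matrix e e ℂ))ᴴ) * (idT U)ᴴ := by
  simp only [U2m, conjTranspose_mul, Matrix.mul_assoc]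

theorem ptrace_S2_kronecker {U : Matrix (n × e) (n × e) ℂ} (hU : Uᴴ * U = 1) (ε : e → ℂ)
    (ρ₁ ρ : Matrix n n ℂ) : ptrace (S2 U ε (ρ₁ ⊗ₖ ρ)) = trace ρ₁ • S1 U ε ρ := by
  ext i j
  calc ptrace (S2 U ε (ρ₁ ⊗ₖ ρ)) i j
      = ∑ a, ∑ k, (idT U * ((ρ₁ ⊗ₖ ρ) ⊗ₖ vecProj ε) * (idT U)ᴴ) ((a, i), k) ((a, j), k) := by
        rw [S2, U2m_conj_eq, ptrace_ptrace_idT_conj hU, swapM_kronecker_one_conj]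
        rfl
    _ = (trace ρ₁ • S1 U ε ρ) i j := by
        simp only [idT_mul_kronecker_mul_conjTranspose_apply, ← Finset.mul_sum, ← Finset.sum_mul]
        rfl

theorem S1_eq_ptrace_S2 {U : Matrix (n × e) (n × e) ℂ} (hU : U ∈ unitaryGroup (n × e) ℂ)
    (ε : e → ℂ) (i₀ : n) (ρ : Matrix n n ℂ) :
    S1 U ε ρ = ptrace (S2 U ε (single i₀ i₀ 1 ⊗ₖ ρ)) := by
  rw [ptrace_S2_kronecker (mem_unitaryGroup_iff'.mp hU), trace_single_eq_same, one_smul]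

end Superoperators

theorem stmt2_general {n e e' : Type*} [Fintype n] [DecidableEq n]
    [Fintype e] [DecidableEq e] [Fintype e'] [DecidableEq e']
    (U : Matrix (n × e) (n × e) ℂ) (hU : U ∈ Matrix.unitaryGroup (n × e) ℂ)
    (ε : e → ℂ)
    (U' : Matrix (n × e') (n × e') ℂ) (hU' : U' ∈ Matrix.unitaryGroup (n × e') ℂ)
    (ε' : e' → ℂ)
    (h2 : ∀ σ : Matrix (n × n) (n × n) ℂ, S2 U ε σ = S2 U' ε' σ) :
    ∀ ρ : Matrix n n ℂ, S1 U ε ρ = S1 U' ε' ρ := by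
  intro ρ
  rcases isEmpty_or_nonempty n with _ | ⟨⟨i₀⟩⟩
  · exact Subsingleton.elim _ _
  · rw [S1_eq_ptrace_S2 hU ε i₀, S1_eq_ptrace_S2 hU' ε' i₀, h2]

/-- Equal second-level superoperators imply equal first-level superoperators. -/
theorem stmt2 {n e e' : Type*} [Fintype n] [DecidableEq n]
    [Fintype e] [DecidableEq e] [Fintype e'] [DecidableEq e']
    (U : Matrix (n × e) (n × e) ℂ) (hU : U ∈ Matrix.unitaryGroup (n × e) ℂ)
    (ε : e → ℂ) (hε : ∑ k, star (ε k) * ε k = 1)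
    (U' : Matrix (n × e') (n × e') ℂ) (hU' : U' ∈ Matrix.unitaryGroup (n × e') ℂ)
    (ε' : e' → ℂ) (hε' : ∑ k, star (ε' k) * ε' k = 1)
    (h2 : ∀ σ : Matrix (n × n) (n × n) ℂ, S2 U ε σ = S2 U' ε' σ) :
    ∀ ρ : Matrix n n ℂ, S1 U ε ρ = S1 U' ε' ρ :=
  stmt2_general U hU ε U' hU' ε' h2
end
end

section
/- Let H = E = ℂ², ε = |0⟩, X the Pauli X matrix, Z = diag(1, −1). The purified channels [I ⊗ X, |0⟩, ℂ²] and [I ⊗ ZX, |0⟩, ℂ²] have equal first-level transformation matrices (both zero) and equal second-level superoperators, but different second-level transformation matrices: T² = 𝔖 (the swap on ℂ² ⊗ ℂ²) for the first and T² = −𝔖 for the second. -/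
open Matrix Kronecker BigOperators

noncomputable section

/-- `idT` on a product `1 ⊗ₖ M` is again `1 ⊗ₖ M` (over the doubled system). -/
lemma idT_one_kron {n e : Type*} [DecidableEq n] (M : Matrix e e ℂ) :
    idT ((1 : Matrix n n ℂ) ⊗ₖ M) = (1 : Matrix (n × n) (n × n) ℂ) ⊗ₖ M := by
  ext ⟨⟨a,b⟩,k⟩ ⟨⟨c,d⟩,l⟩
  simp [idT, Matrix.one_apply, kroneckerMap_apply, Prod.ext_iff]
  by_cases h1 : a = c <;> by_cases h2 : b = d <;> simp [h1, h2]

lemma U2m_one_kron {n e : Type*} [Fintype n] [Fintype e] [DecidableEq n] [DecidableEq e]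
    (M : Matrix e e ℂ) :
    U2m ((1 : Matrix n n ℂ) ⊗ₖ M) = swapM n ⊗ₖ (M * M) := by
  rw [U2m, idT_one_kron, ← Matrix.mul_kronecker_mul, ← Matrix.mul_kronecker_mul]
  simp

lemma sandwich {n e : Type*} [Fintype n] [Fintype e] [DecidableEq n]
    (A : Matrix n n ℂ) (B : Matrix e e ℂ) (ε : e → ℂ) :
    (inj (n := n) ε)ᴴ * (A ⊗ₖ B) * inj ε = (∑ k, ∑ l, star (ε k) * B k l * ε l) • A := by
  ext i j
  erw [Matrix.mul_apply]
  simp_rw [Matrix.mul_apply]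
  simp [inj, Matrix.mul_apply, Matrix.conjTranspose_apply, kroneckerMap_apply,
    Fintype.sum_prod_type, apply_ite (starRingEnd ℂ), ite_mul, Finset.sum_ite_eq']
  simp only [Finset.sum_mul, Finset.mul_sum]
  rw [Finset.sum_comm]
  exact Finset.sum_congr rfl fun k _ => Finset.sum_congr rfl fun l _ => by ring

/-- `[I ⊗ X, |0⟩, ℂ²]` and `[I ⊗ ZX, |0⟩, ℂ²]` have equal (zero) first-level transformation
matrices and equal second-level superoperators, but second-level transformation matrices `𝔖`
and `-𝔖` respectively. -/
theorem stmt5 :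
    let X : Matrix (Fin 2) (Fin 2) ℂ := !![0, 1; 1, 0]
    let Z : Matrix (Fin 2) (Fin 2) ℂ := !![1, 0; 0, -1]
    let ε : Fin 2 → ℂ := Pi.single 0 1
    T1 ((1 : Matrix (Fin 2) (Fin 2) ℂ) ⊗ₖ X) ε = 0 ∧
    T1 ((1 : Matrix (Fin 2) (Fin 2) ℂ) ⊗ₖ (Z * X)) ε = 0 ∧
    (∀ σ : Matrix (Fin 2 × Fin 2) (Fin 2 × Fin 2) ℂ,
      S2 ((1 : Matrix (Fin 2) (Fin 2) ℂ) ⊗ₖ X) ε σ =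
      S2 ((1 : Matrix (Fin 2) (Fin 2) ℂ) ⊗ₖ (Z * X)) ε σ) ∧
    T2 ((1 : Matrix (Fin 2) (Fin 2) ℂ) ⊗ₖ X) ε = swapM (Fin 2) ∧
    T2 ((1 : Matrix (Fin 2) (Fin 2) ℂ) ⊗ₖ (Z * X)) ε = -swapM (Fin 2) := by
  intro X Z ε
  have hXX : X * X = 1 := by
    ext i j; fin_cases i <;> fin_cases j <;> simp [X, Matrix.mul_apply, Fin.sum_univ_two]
  have hZX : (Z * X) * (Z * X) = -1 := by
    ext i j; fin_cases i <;> fin_cases j <;>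
      simp [X, Z, Matrix.mul_apply, Fin.sum_univ_two]
  have hU2X : U2m ((1 : Matrix (Fin 2) (Fin 2) ℂ) ⊗ₖ X) =
      swapM (Fin 2) ⊗ₖ (1 : Matrix (Fin 2) (Fin 2) ℂ) := by
    rw [U2m_one_kron, hXX]
  have hU2ZX : U2m ((1 : Matrix (Fin 2) (Fin 2) ℂ) ⊗ₖ (Z * X)) =
      -(swapM (Fin 2) ⊗ₖ (1 : Matrix (Fin 2) (Fin 2) ℂ)) := by
    rw [U2m_one_kron, hZX]
    ext p q
    simp [kroneckerMap_apply]
  refine ⟨?_, ?_, ?_, ?_, ?_⟩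
  · rw [T1, sandwich]
    simp [ε, X, Fin.sum_univ_two, Pi.single_apply]
  · rw [T1, sandwich]
    simp [ε, X, Z, Matrix.mul_apply, Fin.sum_univ_two, Pi.single_apply]
  · intro σ
    rw [S2, S2, hU2X, hU2ZX]
    simp
  · rw [T2, hU2X, sandwich]
    simp [ε, Fin.sum_univ_two, Pi.single_apply, Matrix.one_apply]
  · rw [T2, hU2ZX, Matrix.mul_neg]
    erw [Matrix.neg_mul, sandwich]
    simp [ε, Fin.sum_univ_two, Pi.single_apply, Matrix.one_apply]
end
end

section
/- On ℂ³ with X the cyclic shift X|x⟩ = |x−1 mod 3⟩ and N = diag(1,−1,1), the purified ℂ-channels [X, |0⟩, ℂ³] and [XN, |0⟩, ℂ³] are not related by any isometry intertwiner: there is no isometry W : ℂ³ → ℂ³ with W|0⟩ = |0⟩ and W X = (XN) W, and likewise no isometry W with W|0⟩ = |0⟩ and W (XN) = X W. -/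
open Matrix Kronecker BigOperators

noncomputable section

/-- The purified ℂ-channels `[X,|0⟩,ℂ³]` and `[XN,|0⟩,ℂ³]` admit no isometric
intertwiner in either direction. -/
theorem stmt11 :
    let X : Matrix (Fin 3) (Fin 3) ℂ := !![0, 1, 0; 0, 0, 1; 1, 0, 0]
    let N : Matrix (Fin 3) (Fin 3) ℂ := !![1, 0, 0; 0, -1, 0; 0, 0, 1]
    let e0 : Fin 3 → ℂ := Pi.single 0 1
    (¬ ∃ W : Matrix (Fin 3) (Fin 3) ℂ,
        Wᴴ * W = 1 ∧ W.mulVec e0 = e0 ∧ W * X = (X * N) * W) ∧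
    (¬ ∃ W : Matrix (Fin 3) (Fin 3) ℂ,
        Wᴴ * W = 1 ∧ W.mulVec e0 = e0 ∧ W * (X * N) = X * W) := by
  intro X N e0
  have hpow : ∀ (A B W : Matrix (Fin 3) (Fin 3) ℂ), W * A = B * W →
      ∀ k : ℕ, W * A ^ k = B ^ k * W := by
    intro A B W hc k
    induction k with
    | zero => simp
    | succ n ih =>
      rw [pow_succ, pow_succ, ← mul_assoc, ih, mul_assoc, hc, ← mul_assoc]
  have hX3 : X ^ 3 = 1 := by
    show (!![0, 1, 0; 0, 0, 1; 1, 0, 0] : Matrix (Fin 3) (Fin 3) ℂ) ^ 3 = 1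
    ext i j
    fin_cases i <;> fin_cases j <;>
      simp [pow_succ, Matrix.mul_apply, Fin.sum_univ_three, Matrix.one_apply, Matrix.vecHead, Matrix.vecTail]
  have hM3 : (X * N) ^ 3 = -1 := by
    show ((!![0, 1, 0; 0, 0, 1; 1, 0, 0] : Matrix (Fin 3) (Fin 3) ℂ) *
        !![1, 0, 0; 0, -1, 0; 0, 0, 1]) ^ 3 = -1
    ext i j
    fin_cases i <;> fin_cases j <;>
      simp [pow_succ, Matrix.mul_apply, Fin.sum_univ_three, Matrix.one_apply, Matrix.vecHead, Matrix.vecTail]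
  have key : ∀ W : Matrix (Fin 3) (Fin 3) ℂ, W = -W →
      W.mulVec e0 = e0 → False := by
    intro W hmw hv
    have h0 : e0 = -e0 := by
      conv_lhs => rw [← hv, hmw]
      rw [Matrix.neg_mulVec, hv]
    have := congrFun h0 0
    simp [e0, Pi.single_apply] at this
    exact one_ne_zero (by linear_combination this / 2 : (1 : ℂ) = 0)
  constructor
  · rintro ⟨W, -, hv, hc⟩
    refine key W ?_ hv
    have := hpow X (X * N) W hc 3
    rw [hX3, hM3, mul_one, neg_one_mul] at this
    exact this
  · rintro ⟨W, -, hv, hc⟩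
    refine key W ?_ hv
    have := hpow (X * N) X W hc 3
    rw [hX3, hM3, one_mul, mul_neg_one] at this
    exact (neg_eq_iff_eq_neg.mp this).symm ▸ this.symm
end
end

section
/- Let H be a finite-dimensional complex Hilbert space with a fixed unit vector |0⟩. The set of operators of the form W†(|0⟩⟨0| ⊗ I_H)W, where W ranges over the unitaries on H ⊗ H, spans the full space L(H ⊗ H) of linear operators on H ⊗ H (as a complex vector space). -/
open Matrix Kronecker BigOperators

noncomputable section

/-- standard basis vector -/
def eV {α : Type*} [DecidableEq α] (x : α) : α → ℂ := fun i => if i = x then 1 else 0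

lemma conjT_vecProj {m : Type*} [Fintype m] (M : Matrix m m ℂ) (x : m → ℂ) :
    Mᴴ * vecProj x * M = vecProj (Mᴴ *ᵥ x) := by
  ext i j
  simp only [vecProj, Matrix.mul_apply, Matrix.mulVec, Matrix.conjTranspose_apply,
    dotProduct, Matrix.of_apply, star_sum, star_mul', star_star]
  rw [Finset.sum_mul_sum]
  rw [Finset.sum_comm]
  refine Finset.sum_congr rfl fun l _ => ?_
  rw [Finset.sum_mul]
  refine Finset.sum_congr rfl fun k _ => ?_
  ring

lemma sum_vecProj_mem {n : Type*} [Fintype n] [DecidableEq n] [Nonempty n]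
    (ψ : n → ℂ) (hψ : ∑ k, star (ψ k) * ψ k = 1)
    (u : n → (n × n) → ℂ)
    (hu : ∀ k l, ∑ i, star (u k i) * u l i = if k = l then (1:ℂ) else 0) :
    (∑ k, vecProj (u k)) ∈ {A : Matrix (n × n) (n × n) ℂ |
      ∃ W ∈ Matrix.unitaryGroup (n × n) ℂ,
        A = Wᴴ * (vecProj ψ ⊗ₖ (1 : Matrix n n ℂ)) * W} := by
  classical
  obtain ⟨a₀⟩ := ‹Nonempty n›
  -- the reference orthonormal family
  set w : n → (n × n) → ℂ := fun k p => ψ p.1 * (if p.2 = k then 1 else 0) with hw_def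
  have hw : ∀ k l, ∑ i, star (w k i) * w l i = if k = l then (1:ℂ) else 0 := by
    intro k l
    rw [Fintype.sum_prod_type]
    simp only [hw_def]
    by_cases hkl : k = l
    · subst hkl
      rw [if_pos rfl]
      calc ∑ x : n, ∑ y : n, star (ψ x * if y = k then 1 else 0) * (ψ x * if y = k then 1 else 0)
          = ∑ x : n, star (ψ x) * ψ x := by
            refine Finset.sum_congr rfl fun x _ => ?_
            rw [Finset.sum_eq_single k] <;> intros <;> simp_all
        _ = 1 := hψ
    · rw [if_neg hkl]
      apply Finset.sum_eq_zero; intro x _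
      apply Finset.sum_eq_zero; intro y _
      by_cases h1 : y = k <;> by_cases h2 : y = l <;> simp_all
  -- orthonormal basis machinery
  have hcard : Module.finrank ℂ (EuclideanSpace ℂ (n × n)) = Fintype.card (n × n) :=
    finrank_euclideanSpace
  set s : Set (n × n) := {p | p.1 = a₀} with hs_def
  have horth : ∀ (v : n → (n × n) → ℂ),
      (∀ k l, ∑ i, star (v k i) * v l i = if k = l then (1:ℂ) else 0) →
      Orthonormal ℂ (s.restrict (fun p => (WithLp.toLp 2 (v p.2) : EuclideanSpace ℂ (n × n)))) := by
    intro v hv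
    rw [orthonormal_iff_ite]
    rintro ⟨p, hp⟩ ⟨q, hq⟩
    have h1 : (inner ℂ (WithLp.toLp 2 (v p.2) : EuclideanSpace ℂ (n × n))
          (WithLp.toLp 2 (v q.2) : EuclideanSpace ℂ (n × n)) : ℂ)
        = ∑ i, star (v p.2 i) * v q.2 i := by
      simp [PiLp.inner_apply, RCLike.inner_apply, Complex.star_def, mul_comm]
    have hpq : (⟨p, hp⟩ : s) = ⟨q, hq⟩ ↔ p.2 = q.2 := by
      constructor
      · intro h; exact congrArg Prod.snd (congrArg Subtype.val h)
      · intro h; ext : 1; exact Prod.ext (hp.trans hq.symm) h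
    change inner ℂ (WithLp.toLp 2 (v p.2) : EuclideanSpace ℂ (n × n))
      (WithLp.toLp 2 (v q.2) : EuclideanSpace ℂ (n × n)) = _
    simp only [Set.restrict_apply, h1, hv p.2 q.2]
    by_cases h : p.2 = q.2
    · rw [if_pos h, if_pos (hpq.mpr h)]
    · rw [if_neg h, if_neg fun hh => h (hpq.mp hh)]
  obtain ⟨b, hb⟩ := Orthonormal.exists_orthonormalBasis_extension_of_card_eq hcard (horth w hw)
  obtain ⟨b', hb'⟩ := Orthonormal.exists_orthonormalBasis_extension_of_card_eq hcard (horth u hu)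
  set B : Matrix (n × n) (n × n) ℂ := Matrix.of fun i j => b j i with hB_def
  set B' : Matrix (n × n) (n × n) ℂ := Matrix.of fun i j => b' j i with hB'_def
  have key : ∀ (c : OrthonormalBasis (n × n) ℂ (EuclideanSpace ℂ (n × n))),
      (Matrix.of fun i j => c j i)ᴴ * (Matrix.of fun i j => c j i) = 1 := by
    intro c
    ext j j'
    have h := orthonormal_iff_ite.mp c.orthonormal j j'
    simp only [PiLp.inner_apply, RCLike.inner_apply] at h
    simp only [Matrix.mul_apply, Matrix.conjTranspose_apply, Matrix.of_apply, Matrix.one_apply]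
    simpa [Complex.star_def, mul_comm] using h
  have hBo : Bᴴ * B = 1 := key b
  have hB'o : B'ᴴ * B' = 1 := key b'
  have hB'o2 : B' * B'ᴴ = 1 := mul_eq_one_comm.mp hB'o
  refine ⟨B * B'ᴴ, ?_, ?_⟩
  · rw [Matrix.mem_unitaryGroup_iff']
    show (B * B'ᴴ)ᴴ * (B * B'ᴴ) = 1
    rw [Matrix.conjTranspose_mul, Matrix.conjTranspose_conjTranspose, Matrix.mul_assoc,
      ← Matrix.mul_assoc Bᴴ, hBo, Matrix.one_mul, hB'o2]
  · have hP : vecProj ψ ⊗ₖ (1 : Matrix n n ℂ) = ∑ k, vecProj (w k) := by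
      ext ⟨i1, i2⟩ ⟨j1, j2⟩
      simp only [Matrix.sum_apply, vecProj, Matrix.kroneckerMap_apply, Matrix.of_apply,
        Matrix.one_apply, hw_def, star_mul']
      rw [Finset.sum_eq_single i2]
      · by_cases h : i2 = j2 <;> simp [h, mul_comm, mul_assoc, mul_left_comm, eq_comm]
      · intro x _ hx; simp [Ne.symm hx]
      · intro hx; exact absurd (Finset.mem_univ i2) hx
    have hwB : ∀ k, w k = B *ᵥ (eV (a₀, k)) := by
      intro k
      funext i
      have : w k i = b (a₀, k) i := by rw [hb (a₀, k) rfl]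
      rw [this]
      simp [Matrix.mulVec, dotProduct, eV, hB_def]
    have huB : ∀ k, u k = B' *ᵥ (eV (a₀, k)) := by
      intro k
      funext i
      have : u k i = b' (a₀, k) i := by rw [hb' (a₀, k) rfl]
      rw [this]
      simp [Matrix.mulVec, dotProduct, eV, hB'_def]
    rw [hP, Finset.mul_sum, Finset.sum_mul]
    refine (Finset.sum_congr rfl fun k _ => ?_).symm
    rw [conjT_vecProj]
    rw [hwB k, huB k, Matrix.conjTranspose_mul, Matrix.conjTranspose_conjTranspose,
      Matrix.mulVec_mulVec, Matrix.mul_assoc, hBo, Matrix.mul_one]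

lemma eV_inner {m : Type*} [Fintype m] [DecidableEq m] (x : m) (f : m → ℂ) :
    ∑ i, star (eV x i) * f i = f x := by
  rw [Finset.sum_eq_single x] <;> intros <;> simp_all [eV]

lemma inner_eV {m : Type*} [Fintype m] [DecidableEq m] (x : m) (f : m → ℂ) :
    ∑ i, star (f i) * eV x i = star (f x) := by
  rw [Finset.sum_eq_single x] <;> intros <;> simp_all [eV]

/-- The pair construction: a unit vector supported on `{p, q}` together with
`eV (k, c)` for `k ≠ p.1` forms an orthonormal family. -/
lemma pair_mem {n : Type*} [Fintype n] [DecidableEq n] [Nonempty n]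
    (ψ : n → ℂ) (hψ : ∑ k, star (ψ k) * ψ k = 1)
    (p q : n × n) (c : n) (hc : c ≠ q.2)
    (v : (n × n) → ℂ) (hv1 : ∑ i, star (v i) * v i = 1)
    (hv0 : ∀ i, i ≠ p → i ≠ q → v i = 0) :
    (vecProj v + ∑ k ∈ Finset.univ.erase p.1, vecProj (eV ((k, c) : n × n))) ∈
      {A : Matrix (n × n) (n × n) ℂ |
      ∃ W ∈ Matrix.unitaryGroup (n × n) ℂ,
        A = Wᴴ * (vecProj ψ ⊗ₖ (1 : Matrix n n ℂ)) * W} := by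
  classical
  set u : n → (n × n) → ℂ := fun k => if k = p.1 then v else eV (k, c) with hu_def
  have hvanish : ∀ k : n, k ≠ p.1 → v (k, c) = 0 := by
    intro k hk
    refine hv0 _ (fun h => hk (congrArg Prod.fst h)) (fun h => hc (congrArg Prod.snd h))
  have hu : ∀ k l, ∑ i, star (u k i) * u l i = if k = l then (1:ℂ) else 0 := by
    intro k l
    by_cases hk : k = p.1 <;> by_cases hl : l = p.1
    · subst hk; rw [hl, if_pos rfl]
      simpa [hu_def] using hv1
    · have hkl : k ≠ l := fun h => hl (h ▸ hk)
      rw [if_neg hkl]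
      simp only [hu_def, if_pos hk, if_neg hl]
      rw [inner_eV, hvanish l hl, star_zero]
    · have hkl : k ≠ l := fun h => hk (h ▸ hl)
      rw [if_neg hkl]
      simp only [hu_def, if_pos hl, if_neg hk]
      rw [eV_inner, hvanish k hk]
    · simp only [hu_def, if_neg hk, if_neg hl]
      rw [inner_eV]
      by_cases hkl : k = l
      · subst hkl; simp [eV]
      · rw [if_neg hkl]
        have : ((k, c) : n × n) ≠ (l, c) := fun h => hkl (congrArg Prod.fst h)
        simp only [eV, if_neg this, star_zero]
        exact star_eq_zero.mpr (if_neg (fun h : (l,c) = (k,c) => hkl (congrArg Prod.fst h).symm))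
  have := sum_vecProj_mem ψ hψ u hu
  convert this using 1
  rw [← Finset.add_sum_erase _ _ (Finset.mem_univ p.1)]
  congr 1
  · simp [hu_def]
  · refine Finset.sum_congr rfl fun k hk => ?_
    rw [hu_def]
    simp [Finset.ne_of_mem_erase hk]

lemma star_a : star (((Real.sqrt 2)⁻¹ : ℝ) : ℂ) = (((Real.sqrt 2)⁻¹ : ℝ) : ℂ) := by
  rw [Complex.star_def, Complex.conj_ofReal]

lemma a_sq : (((Real.sqrt 2)⁻¹ : ℝ) : ℂ) * (((Real.sqrt 2)⁻¹ : ℝ) : ℂ) = 1/2 := by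
  rw [← Complex.ofReal_mul, ← mul_inv, Real.mul_self_sqrt (by norm_num)]
  norm_num

lemma vecProj_eV {m : Type*} [Fintype m] [DecidableEq m] (p : m) :
    vecProj (eV p) = Matrix.single p p 1 := by
  ext i j
  by_cases hi : i = p <;> by_cases hj : j = p
  · simp [vecProj, eV, Matrix.single, hi, hj]
  · simp [vecProj, eV, Matrix.single, hi, hj, show ¬ (p = j) from fun h => hj h.symm]
  · simp [vecProj, eV, Matrix.single, hi, hj, show ¬ (p = i) from fun h => hi h.symm]
  · simp [vecProj, eV, Matrix.single, hi, hj, show ¬ (p = i) from fun h => hi h.symm,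
      show ¬ (p = j) from fun h => hj h.symm]

lemma diff_and_offdiag_mem {n : Type*} [Fintype n] [DecidableEq n] [Nonempty n]
    (ψ : n → ℂ) (hψ : ∑ k, star (ψ k) * ψ k = 1)
    (p q : n × n) (hpq : p ≠ q) :
    (Matrix.single p p (1:ℂ) - Matrix.single q q (1:ℂ)) ∈
      Submodule.span ℂ {A : Matrix (n × n) (n × n) ℂ |
      ∃ W ∈ Matrix.unitaryGroup (n × n) ℂ,
        A = Wᴴ * (vecProj ψ ⊗ₖ (1 : Matrix n n ℂ)) * W} ∧
    (Matrix.single p q (1:ℂ)) ∈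
      Submodule.span ℂ {A : Matrix (n × n) (n × n) ℂ |
      ∃ W ∈ Matrix.unitaryGroup (n × n) ℂ,
        A = Wᴴ * (vecProj ψ ⊗ₖ (1 : Matrix n n ℂ)) * W} := by
  classical
  have hnt : Nontrivial n := by
    by_cases h1 : p.1 = q.1
    · exact ⟨p.2, q.2, fun h2 => hpq (Prod.ext h1 h2)⟩
    · exact ⟨p.1, q.1, h1⟩
  obtain ⟨c, hc⟩ := exists_ne q.2
  set a : ℂ := (((Real.sqrt 2)⁻¹ : ℝ) : ℂ) with ha_def
  set v₃ : (n × n) → ℂ := fun i => if i = p then a else if i = q then a else 0 with hv3_def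
  set v₄ : (n × n) → ℂ := fun i => if i = p then a else if i = q then a * Complex.I else 0
    with hv4_def
  set R := ∑ k ∈ Finset.univ.erase p.1, vecProj (eV ((k, c) : n × n)) with hR_def
  have h1 : vecProj (eV p) + R ∈ Submodule.span ℂ {A : Matrix (n × n) (n × n) ℂ |
      ∃ W ∈ Matrix.unitaryGroup (n × n) ℂ,
        A = Wᴴ * (vecProj ψ ⊗ₖ (1 : Matrix n n ℂ)) * W} :=
    Submodule.subset_span (pair_mem ψ hψ p q c hc (eV p)
      (by rw [eV_inner]; simp [eV]) (fun i hi _ => by simp [eV, hi]))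
  have h2 : vecProj (eV q) + R ∈ Submodule.span ℂ {A : Matrix (n × n) (n × n) ℂ |
      ∃ W ∈ Matrix.unitaryGroup (n × n) ℂ,
        A = Wᴴ * (vecProj ψ ⊗ₖ (1 : Matrix n n ℂ)) * W} :=
    Submodule.subset_span (pair_mem ψ hψ p q c hc (eV q)
      (by rw [eV_inner]; simp [eV]) (fun i _ hi => by simp [eV, hi]))
  have hnorm : ∀ v : (n × n) → ℂ,
      (∀ i, star (v i) * v i = (if i = p then (1:ℂ)/2 else 0) + (if i = q then 1/2 else 0)) →
      ∑ i, star (v i) * v i = 1 := by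
    intro v hv
    calc ∑ i, star (v i) * v i
        = ∑ i, ((if i = p then (1:ℂ)/2 else 0) + (if i = q then 1/2 else 0)) :=
          Finset.sum_congr rfl fun i _ => hv i
      _ = 1 := by rw [Finset.sum_add_distrib]; simp; norm_num
  have h3 : vecProj v₃ + R ∈ Submodule.span ℂ {A : Matrix (n × n) (n × n) ℂ |
      ∃ W ∈ Matrix.unitaryGroup (n × n) ℂ,
        A = Wᴴ * (vecProj ψ ⊗ₖ (1 : Matrix n n ℂ)) * W} := by
    refine Submodule.subset_span (pair_mem ψ hψ p q c hc v₃ (hnorm v₃ ?_) ?_)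
    · intro i
      by_cases hip : i = p
      · have h' : i ≠ q := fun h => hpq (hip ▸ h ▸ rfl)
        simp only [hv3_def, hip, if_pos rfl, if_neg hpq, if_neg h']
        rw [show star a * a = a * a from by rw [ha_def, star_a], a_sq]
        simp [hpq]
      · by_cases hiq : i = q
        · have hqp : ¬ (q = p) := fun h => hpq h.symm
          subst hiq
          simp only [hv3_def, if_neg hqp, eq_self_iff_true, if_true]
          rw [show star a * a = a * a from by rw [ha_def, star_a], a_sq]
          norm_num
        · simp [hv3_def, hip, hiq]
    · intro i hi1 hi2; simp [hv3_def, hi1, hi2]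
  have h4 : vecProj v₄ + R ∈ Submodule.span ℂ {A : Matrix (n × n) (n × n) ℂ |
      ∃ W ∈ Matrix.unitaryGroup (n × n) ℂ,
        A = Wᴴ * (vecProj ψ ⊗ₖ (1 : Matrix n n ℂ)) * W} := by
    refine Submodule.subset_span (pair_mem ψ hψ p q c hc v₄ (hnorm v₄ ?_) ?_)
    · intro i
      by_cases hip : i = p
      · have h' : i ≠ q := fun h => hpq (hip ▸ h ▸ rfl)
        simp only [hv4_def, hip, if_pos rfl, if_neg hpq, if_neg h']
        rw [show star a * a = a * a from by rw [ha_def, star_a], a_sq]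
        simp [hpq]
      · by_cases hiq : i = q
        · have hqp : ¬ (q = p) := fun h => hpq h.symm
          subst hiq
          simp only [hv4_def, if_neg hqp, eq_self_iff_true, if_true]
          have hsa : star (a * Complex.I) = a * -Complex.I := by
            rw [star_mul', ha_def, star_a, Complex.star_def, Complex.conj_I]
          rw [hsa, show a * -Complex.I * (a * Complex.I)
              = a * a * -(Complex.I * Complex.I) from by ring, a_sq, Complex.I_mul_I]
          norm_num
        · simp [hv4_def, hip, hiq]
    · intro i hi1 hi2; simp [hv4_def, hi1, hi2]
  constructor
  · have key : Matrix.single p p (1:ℂ) - Matrix.single q q (1:ℂ)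
        = (vecProj (eV p) + R) - (vecProj (eV q) + R) := by
      rw [vecProj_eV, vecProj_eV]; abel
    rw [key]; exact sub_mem h1 h2
  · have key : Matrix.single p q (1:ℂ) =
        (vecProj v₃ + R) + Complex.I • (vecProj v₄ + R)
          - ((1+Complex.I)/2) • (vecProj (eV p) + R)
          - ((1+Complex.I)/2) • (vecProj (eV q) + R) := by
      have hqp : ¬ (q = p) := fun h => hpq h.symm
      have hsq : a * a = 1/2 := by rw [ha_def]; exact a_sq
      have hstar : star a = a := by rw [ha_def]; exact star_a
      have hI : star Complex.I = -Complex.I := by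
        rw [Complex.star_def, Complex.conj_I]
      have hpi : ∀ (x y : n × n), star (if x = y then (1:ℂ) else 0)
          = if x = y then 1 else 0 := by
        intro x y; split_ifs <;> simp
      have hv3e : ∀ i, v₃ i
          = a * ((if i = p then (1:ℂ) else 0) + (if i = q then 1 else 0)) := by
        intro i
        by_cases hip : i = p
        · have h' : i ≠ q := fun h => hpq (hip ▸ h ▸ rfl)
          simp [hv3_def, hip, h', hpq]
        · by_cases hiq : i = q <;> simp [hv3_def, hip, hiq, hqp]
      have hv4e : ∀ i, v₄ i
          = a * ((if i = p then (1:ℂ) else 0) + Complex.I * (if i = q then 1 else 0)) := by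
        intro i
        by_cases hip : i = p
        · have h' : i ≠ q := fun h => hpq (hip ▸ h ▸ rfl)
          simp [hv4_def, hip, h', hpq]
        · by_cases hiq : i = q <;> simp [hv4_def, hip, hiq, hqp, mul_comm]
      have hstd : ∀ i j : n × n, Matrix.single p q (1:ℂ) i j
          = (if i = p then (1:ℂ) else 0) * (if j = q then 1 else 0) := by
        intro i j
        by_cases hb1 : i = p <;> by_cases hb2 : j = q
        · subst hb1; subst hb2; simp [Matrix.single]
        · subst hb1; simp [Matrix.single, hb2, show ¬ (q = j) from fun h => hb2 h.symm]
        · subst hb2; simp [Matrix.single, hb1, show ¬ (p = i) from fun h => hb1 h.symm]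
        · simp [Matrix.single, hb1, hb2, show ¬ (p = i) from fun h => hb1 h.symm,
            show ¬ (q = j) from fun h => hb2 h.symm]
      clear h1 h2 h3 h4 hnorm hc hψ
      clear_value a
      ext i j
      rw [hstd i j]
      simp only [Matrix.sub_apply, Matrix.add_apply, Matrix.smul_apply, smul_eq_mul,
        vecProj, Matrix.of_apply, eV]
      rw [hv3e i, hv3e j, hv4e i, hv4e j]
      simp only [star_mul', star_add, hstar, hpi, hI]
      set X : ℂ := (if i = p then (1:ℂ) else 0)
      set Y : ℂ := (if i = q then (1:ℂ) else 0)
      set Z : ℂ := (if j = p then (1:ℂ) else 0)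
      set T : ℂ := (if j = q then (1:ℂ) else 0)
      set r : ℂ := R i j
      linear_combination (-(1 + Complex.I) * (X * Z + Y * T) - 2 * (X * T)) * hsq
        + (a * a * (X * T + Complex.I * T * Y - Z * Y)) * Complex.I_mul_I
    rw [key]
    exact sub_mem (sub_mem (add_mem h3 (Submodule.smul_mem _ _ h4))
      (Submodule.smul_mem _ _ h1)) (Submodule.smul_mem _ _ h2)

lemma one_mem_span {n : Type*} [Fintype n] [DecidableEq n] [Nonempty n]
    (ψ : n → ℂ) (hψ : ∑ k, star (ψ k) * ψ k = 1) :
    (1 : Matrix (n × n) (n × n) ℂ) ∈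
      Submodule.span ℂ {A : Matrix (n × n) (n × n) ℂ |
      ∃ W ∈ Matrix.unitaryGroup (n × n) ℂ,
        A = Wᴴ * (vecProj ψ ⊗ₖ (1 : Matrix n n ℂ)) * W} := by
  classical
  have hG : ∀ c : n, (∑ k, vecProj (eV ((k, c) : n × n))) ∈
      {A : Matrix (n × n) (n × n) ℂ | ∃ W ∈ Matrix.unitaryGroup (n × n) ℂ,
        A = Wᴴ * (vecProj ψ ⊗ₖ (1 : Matrix n n ℂ)) * W} := by
    intro c
    apply sum_vecProj_mem ψ hψ (fun k => eV ((k, c) : n × n))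
    intro k l
    rw [eV_inner]
    by_cases h : k = l
    · subst h; simp [eV]
    · rw [if_neg h, eV, if_neg (show ((k, c) : n × n) ≠ (l, c) from
        fun hh => h (congrArg Prod.fst hh))]
  have hid : (1 : Matrix (n × n) (n × n) ℂ) = ∑ c : n, ∑ k : n, vecProj (eV ((k, c) : n × n)) := by
    ext i j
    simp only [Matrix.sum_apply, vecProj, Matrix.of_apply, eV, Matrix.one_apply]
    symm
    have hterm : ∀ c k : n, (if i = (k, c) then (1:ℂ) else 0) * star (if j = (k, c) then 1 else 0)
        = if i = (k, c) ∧ j = (k, c) then 1 else 0 := by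
      intro c k; split_ifs with h1 h2 h3 <;> simp_all
    calc ∑ c : n, ∑ k : n, (if i = (k, c) then (1:ℂ) else 0) * star (if j = (k, c) then 1 else 0)
        = ∑ c : n, ∑ k : n, if i = (k, c) ∧ j = (k, c) then (1:ℂ) else 0 :=
          Finset.sum_congr rfl fun c _ => Finset.sum_congr rfl fun k _ => hterm c k
      _ = if i = j then 1 else 0 := by
          by_cases h : i = j
          · subst h
            rw [if_pos rfl, Finset.sum_eq_single i.2]
            · rw [Finset.sum_eq_single i.1]
              · simp
              · intro k _ hk
                rw [if_neg]; rintro ⟨h1, -⟩; exact hk (congrArg Prod.fst h1).symm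
              · intro h; exact absurd (Finset.mem_univ i.1) h
            · intro c _ hc
              apply Finset.sum_eq_zero; intro k _
              rw [if_neg]; rintro ⟨h1, -⟩; exact hc (congrArg Prod.snd h1).symm
            · intro h; exact absurd (Finset.mem_univ i.2) h
          · rw [if_neg h]
            apply Finset.sum_eq_zero; intro c _
            apply Finset.sum_eq_zero; intro k _
            rw [if_neg]; rintro ⟨h1, h2⟩; exact h (h1.trans h2.symm)
  rw [hid]
  exact Submodule.sum_mem _ fun c _ => Submodule.subset_span (hG c)

lemma diag_mem {n : Type*} [Fintype n] [DecidableEq n] [Nonempty n]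
    (ψ : n → ℂ) (hψ : ∑ k, star (ψ k) * ψ k = 1) (p : n × n) :
    Matrix.single p p (1:ℂ) ∈
      Submodule.span ℂ {A : Matrix (n × n) (n × n) ℂ |
      ∃ W ∈ Matrix.unitaryGroup (n × n) ℂ,
        A = Wᴴ * (vecProj ψ ⊗ₖ (1 : Matrix n n ℂ)) * W} := by
  classical
  have hone := one_mem_span ψ hψ
  have hdiff : ∀ q ∈ Finset.univ.erase p,
      (Matrix.single p p (1:ℂ) - Matrix.single q q (1:ℂ)) ∈
      Submodule.span ℂ {A : Matrix (n × n) (n × n) ℂ |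
      ∃ W ∈ Matrix.unitaryGroup (n × n) ℂ,
        A = Wᴴ * (vecProj ψ ⊗ₖ (1 : Matrix n n ℂ)) * W} := fun q hq =>
    (diff_and_offdiag_mem ψ hψ p q (Ne.symm (Finset.ne_of_mem_erase hq))).1
  have hsumE : ∑ q : n × n, Matrix.single q q (1:ℂ) = 1 := by
    ext i j
    simp only [Matrix.sum_apply, Matrix.single, Matrix.of_apply, Matrix.one_apply]
    rw [Finset.sum_eq_single i]
    · by_cases h : i = j <;> simp [h]
    · intro q _ hq; simp [hq]
    · intro h; exact absurd (Finset.mem_univ i) h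
  have hN : 1 ≤ Fintype.card (n × n) := Fintype.card_pos
  have hNne : ((Fintype.card (n × n) : ℂ)) ≠ 0 :=
    Nat.cast_ne_zero.mpr Fintype.card_ne_zero
  have key : (1 : Matrix (n × n) (n × n) ℂ)
      + ∑ q ∈ Finset.univ.erase p,
        (Matrix.single p p (1:ℂ) - Matrix.single q q (1:ℂ))
      = (Fintype.card (n × n) : ℂ) • Matrix.single p p (1:ℂ) := by
    rw [Finset.sum_sub_distrib, Finset.sum_const,
      Finset.sum_erase_eq_sub (Finset.mem_univ p), hsumE,
      Finset.card_erase_of_mem (Finset.mem_univ p), Finset.card_univ,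
      ← Nat.cast_smul_eq_nsmul ℂ, Nat.cast_sub hN, Nat.cast_one]
    module
  have hEp : Matrix.single p p (1:ℂ)
      = ((Fintype.card (n × n) : ℂ))⁻¹ • ((1 : Matrix (n × n) (n × n) ℂ)
        + ∑ q ∈ Finset.univ.erase p,
          (Matrix.single p p (1:ℂ) - Matrix.single q q (1:ℂ))) := by
    rw [key, inv_smul_smul₀ hNne]
  rw [hEp]
  exact Submodule.smul_mem _ _
    (Submodule.add_mem _ hone (Submodule.sum_mem _ hdiff))


/-- Operators of the form `W†(|0⟩⟨0| ⊗ I_H)W` with `W` unitary span `L(H ⊗ H)`. -/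
theorem stmt14 {n : Type*} [Fintype n] [DecidableEq n]
    (ψ : n → ℂ) (hψ : ∑ k, star (ψ k) * ψ k = 1) :
    Submodule.span ℂ {A : Matrix (n × n) (n × n) ℂ |
      ∃ W ∈ Matrix.unitaryGroup (n × n) ℂ,
        A = Wᴴ * (vecProj ψ ⊗ₖ (1 : Matrix n n ℂ)) * W} = ⊤ := by
  classical
  have hne : Nonempty n := by
    by_contra h
    rw [not_nonempty_iff] at h
    rw [Finset.univ_eq_empty, Finset.sum_empty] at hψ
    exact zero_ne_one hψ
  rw [eq_top_iff]
  intro A _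
  rw [Matrix.matrix_eq_sum_single A]
  refine Submodule.sum_mem _ fun i _ => Submodule.sum_mem _ fun j _ => ?_
  have hA : Matrix.single i j (A i j) = A i j • Matrix.single i j (1:ℂ) := by
    ext a b
    simp only [Matrix.single, Matrix.smul_apply, Matrix.of_apply, smul_eq_mul]
    split_ifs <;> simp
  rw [hA]
  refine Submodule.smul_mem _ _ ?_
  by_cases h : i = j
  · subst h; exact diag_mem ψ hψ i
  · exact (diff_and_offdiag_mem ψ hψ i j h).2
end
end

section
/- Let H be a finite-dimensional Hilbert space of dimension d ≥ 1 with orthonormal basis |0⟩,…,|d−1⟩. For each i, let Vᵢ = I_{H⊗H} − (|0⟩−|i⟩)(⟨0|−⟨i|) ⊗ |0⟩⟨0|, and let 𝔖 be the swap on H ⊗ H. Then |00⟩⟨00| = (|0⟩⟨0| ⊗ I_H) − (1/d) Σ_{i=0}^{d−1} Vᵢ (|0⟩⟨0| ⊗ I_H) Vᵢ† + (1/d) 𝔖 (|0⟩⟨0| ⊗ I_H) 𝔖†. -/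
open Matrix Kronecker BigOperators

noncomputable section

lemma kron_conjT {l m n p : Type*} (A : Matrix l m ℂ) (B : Matrix n p ℂ) :
    (A ⊗ₖ B)ᴴ = Aᴴ ⊗ₖ Bᴴ := by
  ext ⟨a,b⟩ ⟨c,e⟩
  simp [conjTranspose_apply, kroneckerMap_apply, mul_comm]

lemma vecProj_conjT {e : Type*} (ε : e → ℂ) : (vecProj ε)ᴴ = vecProj ε := by
  ext a c; simp [vecProj, conjTranspose_apply, mul_comm]

lemma vmv_conjT {e : Type*} (w : e → ℂ) :
    (Matrix.vecMulVec w (star w))ᴴ = Matrix.vecMulVec w (star w) := by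
  ext a c; simp [vecMulVec, conjTranspose_apply, mul_comm]

lemma proj_sq (d : ℕ) (z : Fin d) :
    vecProj (Pi.single z (1:ℂ)) * vecProj (Pi.single z (1:ℂ)) = vecProj (Pi.single z (1:ℂ)) := by
  ext a c; simp [mul_apply, vecProj, Pi.single_apply, apply_ite (starRingEnd ℂ), ite_and,
    Finset.mul_sum, Finset.sum_mul]

lemma sum_proj (d : ℕ) : ∑ i : Fin d, vecProj (Pi.single i (1:ℂ)) = 1 := by
  ext a c
  simp [vecProj, Pi.single_apply, one_apply, Matrix.sum_apply, apply_ite (starRingEnd ℂ), ite_and,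
    Finset.sum_ite_eq]

lemma key (d : ℕ) (hd : 0 < d) (i : Fin d) :
    let z : Fin d := ⟨0, hd⟩
    let e0 : Fin d → ℂ := Pi.single z 1
    let w : Fin d → ℂ := e0 - Pi.single i 1
    Matrix.vecMulVec w (star w) * vecProj e0 + vecProj e0 * Matrix.vecMulVec w (star w)
      - Matrix.vecMulVec w (star w) * vecProj e0 * Matrix.vecMulVec w (star w)
      = vecProj e0 - vecProj (Pi.single i 1) := by
  intro z e0 w
  ext a c
  simp [mul_apply, vecMulVec, vecProj, w, e0, Pi.single_apply, Pi.sub_apply, mul_comm,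
    mul_assoc, Finset.mul_sum, Finset.sum_mul, apply_ite (starRingEnd ℂ), ite_and]
  split_ifs <;> simp_all

lemma swap_conj (d : ℕ) (hd : 0 < d) :
    let z : Fin d := ⟨0, hd⟩
    let e0 : Fin d → ℂ := Pi.single z 1
    swapM (Fin d) * (vecProj e0 ⊗ₖ (1 : Matrix (Fin d) (Fin d) ℂ)) * (swapM (Fin d))ᴴ
      = (1 : Matrix (Fin d) (Fin d) ℂ) ⊗ₖ vecProj e0 := by
  intro z e0
  ext ⟨a,b⟩ ⟨c,e⟩
  simp [mul_apply, swapM, vecProj, e0, Pi.single_apply, one_apply, Fintype.sum_prod_type,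
    conjTranspose_apply, apply_ite (starRingEnd ℂ), ite_and, Finset.mul_sum, Finset.sum_mul]
  split_ifs <;> simp_all

lemma proj00 (d : ℕ) (hd : 0 < d) :
    let z : Fin d := ⟨0, hd⟩
    vecProj (Pi.single (z, z) (1 : ℂ)) = vecProj (Pi.single z (1:ℂ)) ⊗ₖ vecProj (Pi.single z (1:ℂ)) := by
  intro z
  ext ⟨a,b⟩ ⟨c,e⟩
  simp [vecProj, Pi.single_apply, Prod.ext_iff, ite_and, apply_ite (starRingEnd ℂ)]
  split_ifs <;> simp_all

lemma sub_kron {l m n p : Type*} [Fintype m] (A B : Matrix l m ℂ) (C : Matrix n p ℂ) :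
    (A - B) ⊗ₖ C = A ⊗ₖ C - B ⊗ₖ C := by
  ext ⟨a,b⟩ ⟨c,e⟩; simp [kroneckerMap_apply, sub_mul]

lemma sum_kron {ι l m n p : Type*} [Fintype ι] (f : ι → Matrix l m ℂ) (C : Matrix n p ℂ) :
    ∑ i, (f i) ⊗ₖ C = (∑ i, f i) ⊗ₖ C := by
  ext ⟨a,b⟩ ⟨c,e⟩
  simp [Matrix.sum_apply, kroneckerMap_apply, Finset.sum_mul]

/-- Explicit decomposition of `|00⟩⟨00|` in terms of `|0⟩⟨0| ⊗ I`, the unitaries `Vᵢ`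
and the swap `𝔖`. -/
theorem stmt15 (d : ℕ) (hd : 0 < d) :
    let z : Fin d := ⟨0, hd⟩
    let e0 : Fin d → ℂ := Pi.single z 1
    let P : Matrix (Fin d × Fin d) (Fin d × Fin d) ℂ :=
      vecProj e0 ⊗ₖ (1 : Matrix (Fin d) (Fin d) ℂ)
    let V : Fin d → Matrix (Fin d × Fin d) (Fin d × Fin d) ℂ := fun i =>
      1 - (Matrix.vecMulVec (e0 - Pi.single i 1) (star (e0 - Pi.single i 1)) ⊗ₖ vecProj e0)
    vecProj (Pi.single (z, z) (1 : ℂ)) =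
      P - ((1 : ℂ) / d) • (∑ i, V i * P * (V i)ᴴ)
        + ((1 : ℂ) / d) • (swapM (Fin d) * P * (swapM (Fin d))ᴴ) := by
  intro z e0 P V
  set p : Matrix (Fin d) (Fin d) ℂ := vecProj e0 with hp
  have hA : ∀ i : Fin d, V i * P * (V i)ᴴ
      = P - (p - vecProj (Pi.single i 1)) ⊗ₖ p := by
    intro i
    set A : Matrix (Fin d) (Fin d) ℂ :=
      Matrix.vecMulVec (e0 - Pi.single i 1) (star (e0 - Pi.single i 1)) with hAdef
    have hVH : (V i)ᴴ = V i := by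
      show (1 - A ⊗ₖ p)ᴴ = 1 - A ⊗ₖ p
      rw [conjTranspose_sub, conjTranspose_one, kron_conjT, vmv_conjT, vecProj_conjT]
    have hps : p * p = p := proj_sq d z
    have step : V i * P * (V i)ᴴ = P - (A * p + p * A - A * p * A) ⊗ₖ p := by
      rw [hVH]
      show (1 - A ⊗ₖ p) * (p ⊗ₖ 1) * (1 - A ⊗ₖ p) = _
      rw [sub_kron, add_kronecker]
      simp only [sub_mul, mul_sub, one_mul, mul_one, ← mul_kronecker_mul, hps]
      noncomm_ring
    rw [step, key d hd i]
  have hsum : (∑ i, V i * P * (V i)ᴴ)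
      = (d : ℂ) • P - ((d : ℂ) • (p ⊗ₖ p) - (1 : Matrix (Fin d) (Fin d) ℂ) ⊗ₖ p) := by
    have : (∑ i, V i * P * (V i)ᴴ)
        = ∑ i : Fin d, (P - (p - vecProj (Pi.single i 1)) ⊗ₖ p) := by
      exact Finset.sum_congr rfl fun i _ => hA i
    rw [this, Finset.sum_sub_distrib, Finset.sum_const, Finset.card_fin, sum_kron]
    rw [Finset.sum_sub_distrib, Finset.sum_const, Finset.card_fin, sum_proj]
    rw [sub_kron]
    simp only [← Nat.cast_smul_eq_nsmul ℂ, smul_kronecker]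
  have hswap := swap_conj d hd
  rw [hsum, hswap, proj00 d hd]
  have hd' : ((1:ℂ)/d) * d = 1 :=
    one_div_mul_cancel (Nat.cast_ne_zero.mpr hd.ne')
  rw [smul_sub, smul_sub, smul_smul, smul_smul, hd', one_smul, one_smul]
  abel
end
end

section
/- Let ρ, ρ' ∈ L(H ⊗ H) be operators on a finite-dimensional Hilbert space H ⊗ H with ρ ≠ ρ'. Then there exists a unitary W on H ⊗ H such that Tr[ρ W†(|0⟩⟨0| ⊗ I_H)W] ≠ Tr[ρ' W†(|0⟩⟨0| ⊗ I_H)W], where |0⟩ is a fixed unit vector of H. -/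
open Matrix Kronecker BigOperators

noncomputable section

set_option linter.unusedSectionVars false

namespace Stmt16Aux

variable {m : Type*} [Fintype m] [DecidableEq m]

lemma conj_vecProj (W : Matrix m m ℂ) (x : m → ℂ) :
    Wᴴ * vecProj x * W = vecProj (Wᴴ.mulVec x) := by
  ext a b
  have L : (Wᴴ * vecProj x * W) a b = ∑ c, ∑ d, star (W c a) * x c * (star (x d) * W d b) := by
    simp only [Matrix.mul_apply, vecProj, of_apply, conjTranspose_apply, Finset.sum_mul]
    rw [Finset.sum_comm]
    exact Finset.sum_congr rfl fun c _ => Finset.sum_congr rfl fun d _ => by ring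
  have R : vecProj (Wᴴ.mulVec x) a b = ∑ c, ∑ d, star (W c a) * x c * (star (x d) * W d b) := by
    simp only [vecProj, of_apply, mulVec, dotProduct, conjTranspose_apply, star_sum, star_mul',
      star_star]
    rw [Finset.sum_mul_sum]
    exact Finset.sum_congr rfl fun c _ => Finset.sum_congr rfl fun d _ => by ring
  rw [L, R]

lemma trace_mul_vecProj (σ : Matrix m m ℂ) (u : m → ℂ) :
    (σ * vecProj u).trace = ∑ a, ∑ b, star (u a) * σ a b * u b := by
  simp only [Matrix.trace, Matrix.diag, Matrix.mul_apply, vecProj, of_apply]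
  refine Finset.sum_congr rfl fun a _ => Finset.sum_congr rfl fun b _ => by ring

lemma kron_decomp {n : Type*} [Fintype n] [DecidableEq n] (ψ : n → ℂ) :
    (vecProj ψ ⊗ₖ (1 : Matrix n n ℂ)) =
      ∑ k : n, vecProj (fun p : n × n => ψ p.1 * (if p.2 = k then 1 else 0)) := by
  ext ⟨a, b⟩ ⟨c, d⟩
  simp only [Matrix.sum_apply, vecProj, of_apply, kroneckerMap_apply, Matrix.one_apply,
    star_mul', mul_ite, ite_mul, mul_one, mul_zero, one_mul, zero_mul]
  simp [Finset.sum_ite_eq', apply_ite (star : ℂ → ℂ)]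
  split_ifs <;> simp_all

lemma onb_sum (b : OrthonormalBasis m ℂ (EuclideanSpace ℂ m)) (q r : m) :
    ∑ p, star (b q p) * b r p = if q = r then (1 : ℂ) else 0 := by
  have h := orthonormal_iff_ite.mp b.orthonormal q r
  simp [PiLp.inner_apply, RCLike.inner_apply, Complex.star_def] at h
  rw [← h]
  exact Finset.sum_congr rfl fun _ _ => mul_comm _ _

/-- The matrix whose columns are an orthonormal basis is unitary. -/
lemma basis_unitary (b : OrthonormalBasis m ℂ (EuclideanSpace ℂ m)) :
    (Matrix.of fun p q : m => b q p) ∈ Matrix.unitaryGroup m ℂ := by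
  rw [Matrix.mem_unitaryGroup_iff']
  ext q r
  have := onb_sum b q r
  simpa [Matrix.mul_apply, Matrix.star_eq_conjTranspose, conjTranspose_apply,
    Matrix.one_apply] using this

/-- Extend an orthonormal family indexed by `n`, placed on the row `{j0} × n`,
to an orthonormal basis of `EuclideanSpace ℂ (n × n)`. -/
lemma extend_row {n : Type*} [Fintype n] [DecidableEq n] (j0 : n) (u : n → (n × n) → ℂ)
    (hu : ∀ j j', ∑ p, star (u j p) * u j' p = (if j = j' then (1 : ℂ) else 0)) :
    ∃ b : OrthonormalBasis (n × n) ℂ (EuclideanSpace ℂ (n × n)),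
      ∀ j p, b (j0, j) p = u j p := by
  have hcard : Module.finrank ℂ (EuclideanSpace ℂ (n × n)) = Fintype.card (n × n) :=
    finrank_euclideanSpace
  set v : n × n → EuclideanSpace ℂ (n × n) := fun q => (WithLp.equiv 2 _).symm (u q.2) with hv
  have hON : Orthonormal ℂ (Set.restrict {q : n × n | q.1 = j0} v) := by
    rw [orthonormal_iff_ite]
    rintro ⟨q, hq⟩ ⟨r, hr⟩
    have h1 : ((⟨q, hq⟩ : {q : n × n | q.1 = j0}) = ⟨r, hr⟩) ↔ q.2 = r.2 := by
      simp only [Set.mem_setOf_eq] at hq hr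
      constructor
      · intro h; exact congrArg (fun z => (z : n × n).2) (Subtype.ext_iff.mp h) ▸ rfl
      · intro h
        exact Subtype.ext (Prod.ext (hq.trans hr.symm) h)
    have h2 : (inner ℂ (Set.restrict {q : n × n | q.1 = j0} v ⟨q, hq⟩)
        (Set.restrict {q : n × n | q.1 = j0} v ⟨r, hr⟩) : ℂ) = ∑ p, star (u q.2 p) * u r.2 p := by
      simp only [PiLp.inner_apply, RCLike.inner_apply, Set.restrict_apply, hv]
      exact Finset.sum_congr rfl fun _ _ => mul_comm _ _
    rw [h2, hu]
    simp [h1]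
  obtain ⟨b, hb⟩ := hON.exists_orthonormalBasis_extension_of_card_eq hcard
  refine ⟨b, fun j p => ?_⟩
  have := hb (j0, j) (by simp)
  rw [this]
  rfl


/-- The quadratic form of a matrix. -/
def Qform (Δ : Matrix m m ℂ) (x : m → ℂ) : ℂ := ∑ a, ∑ b, star (x a) * Δ a b * x b

lemma key {n : Type*} [Fintype n] [DecidableEq n] (ψ : n → ℂ)
    (hψ : ∑ k, star (ψ k) * ψ k = 1) (Δ : Matrix (n × n) (n × n) ℂ)
    (h : ∀ W ∈ Matrix.unitaryGroup (n × n) ℂ,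
      (Δ * (Wᴴ * (vecProj ψ ⊗ₖ (1 : Matrix n n ℂ)) * W)).trace = 0)
    (j0 : n) (u : n → (n × n) → ℂ)
    (hu : ∀ j j', ∑ p, star (u j p) * u j' p = (if j = j' then (1 : ℂ) else 0)) :
    ∑ k, Qform Δ (u k) = 0 := by
  -- the fixed orthonormal family ψ ⊗ e_k
  set v : n → (n × n) → ℂ := fun k p => ψ p.1 * (if p.2 = k then 1 else 0) with hvdef
  have hvON : ∀ j j', ∑ p, star (v j p) * v j' p = (if j = j' then (1 : ℂ) else 0) := by
    intro j j'
    rw [show (∑ p, star (v j p) * v j' p)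
        = ∑ a : n, ∑ c : n, star (v j (a, c)) * v j' (a, c) from Fintype.sum_prod_type _]
    simp only [hvdef, star_mul', mul_ite, ite_mul, mul_one, mul_zero, one_mul, zero_mul,
      star_one, star_zero, apply_ite (star : ℂ → ℂ)]
    by_cases hjj : j = j'
    · subst hjj
      simp [Finset.sum_ite_eq']
      simpa [Complex.star_def] using hψ
    · simp only [if_neg hjj]
      rw [Finset.sum_eq_zero]
      intro a _
      rw [Finset.sum_eq_zero]
      intro c _
      by_cases h1 : c = j <;> by_cases h2 : c = j' <;> simp_all
  obtain ⟨b, hb⟩ := extend_row j0 u hu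
  obtain ⟨b', hb'⟩ := extend_row j0 v hvON
  set V : Matrix (n × n) (n × n) ℂ := Matrix.of fun p q => b q p with hV
  set V' : Matrix (n × n) (n × n) ℂ := Matrix.of fun p q => b' q p with hV'
  have hWmem : V' * Vᴴ ∈ Matrix.unitaryGroup (n × n) ℂ := by
    refine mul_mem (basis_unitary b') ?_
    rw [show Vᴴ = star V from rfl]
    exact Unitary.star_mem (basis_unitary b)
  have hmv : ∀ k, (V' * Vᴴ)ᴴ.mulVec (v k) = u k := by
    intro k
    have hA : V'ᴴ.mulVec (v k) = Pi.single (j0, k) 1 := by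
      funext q
      have h1 : V'ᴴ.mulVec (v k) q = ∑ p, star (b' q p) * b' (j0, k) p := by
        simp only [mulVec, dotProduct, conjTranspose_apply, hV', of_apply]
        exact Finset.sum_congr rfl fun p _ => by rw [hb' k p]
      rw [h1, onb_sum b' q (j0, k), Pi.single_apply]
    have : (V' * Vᴴ)ᴴ = V * V'ᴴ := by
      rw [conjTranspose_mul, conjTranspose_conjTranspose]
    rw [this, ← mulVec_mulVec, hA]
    funext p
    simp only [mulVec, dotProduct, Pi.single_apply, mul_ite, mul_one, mul_zero,
      Finset.sum_ite_eq', Finset.mem_univ, if_true]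
    rw [hV]
    exact hb k p
  have htr := h (V' * Vᴴ) hWmem
  rw [kron_decomp] at htr
  have hexp : Δ * ((V' * Vᴴ)ᴴ * (∑ k : n, vecProj (fun p : n × n => ψ p.1 *
      (if p.2 = k then 1 else 0))) * (V' * Vᴴ)) = ∑ k : n, Δ * vecProj (u k) := by
    rw [Finset.mul_sum, Finset.sum_mul, Finset.mul_sum]
    refine Finset.sum_congr rfl fun k _ => ?_
    rw [show (V' * Vᴴ)ᴴ * vecProj (fun p : n × n => ψ p.1 * (if p.2 = k then 1 else 0)) *
        (V' * Vᴴ) = vecProj ((V' * Vᴴ)ᴴ.mulVec (v k)) from conj_vecProj _ _, hmv k]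
  rw [show Δ * ((V' * Vᴴ)ᴴ * (∑ k : n, vecProj fun p : n × n => ψ p.1 *
      (if p.2 = k then 1 else 0)) * (V' * Vᴴ))
      = ∑ k : n, Δ * vecProj (u k) from hexp, trace_sum] at htr
  rw [← htr]
  exact Finset.sum_congr rfl fun k _ => (trace_mul_vecProj Δ (u k)).symm

lemma qform_unit_zero {n : Type*} [Fintype n] [DecidableEq n] [Nonempty n]
    (Δ : Matrix (n × n) (n × n) ℂ)
    (hK : ∀ u : n → (n × n) → ℂ,
      (∀ j j', ∑ p, star (u j p) * u j' p = (if j = j' then (1 : ℂ) else 0)) →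
      ∑ k, Qform Δ (u k) = 0)
    (x : (n × n) → ℂ) (hx : ∑ p, star (x p) * x p = 1) : Qform Δ x = 0 := by
  obtain j0 : n := Classical.arbitrary n
  -- extend x to an orthonormal basis with B (j0, j0) = x
  have hcard : Module.finrank ℂ (EuclideanSpace ℂ (n × n)) = Fintype.card (n × n) :=
    finrank_euclideanSpace
  have hON : Orthonormal ℂ (Set.restrict {q : n × n | q = (j0, j0)}
      (fun _ : n × n => ((WithLp.equiv 2 _).symm x : EuclideanSpace ℂ (n × n)))) := by
    rw [orthonormal_iff_ite]
    rintro ⟨q, hq⟩ ⟨r, hr⟩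
    have : (⟨q, hq⟩ : {q : n × n | q = (j0, j0)}) = ⟨r, hr⟩ := by
      simp only [Set.mem_setOf_eq] at hq hr
      exact Subtype.ext (hq.trans hr.symm)
    rw [if_pos this, this]
    have h2 : (inner ℂ ((WithLp.equiv 2 _).symm x : EuclideanSpace ℂ (n × n))
        ((WithLp.equiv 2 _).symm x : EuclideanSpace ℂ (n × n)) : ℂ)
        = ∑ p, star (x p) * x p := by
      simp only [PiLp.inner_apply, RCLike.inner_apply]
      exact Finset.sum_congr rfl fun _ _ => mul_comm _ _
    exact h2.trans hx
  obtain ⟨B, hB⟩ := hON.exists_orthonormalBasis_extension_of_card_eq hcard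
  have hBx : ∀ p, B (j0, j0) p = x p := by
    intro p
    rw [hB (j0, j0) (by simp)]
    rfl
  have hrow : ∀ i : n, ∑ j, Qform Δ (fun p => B (i, j) p) = 0 := by
    intro i
    refine hK _ fun j j' => ?_
    rw [onb_sum B (i, j) (i, j')]
    simp [Prod.ext_iff]
  -- find i1 with Qform Δ (B (i1, j)) = Qform Δ x for all j
  obtain ⟨i1, hi1⟩ : ∃ i1 : n, ∀ j, Qform Δ (fun p => B (i1, j) p) = Qform Δ x := by
    by_cases hex : ∃ i : n, i ≠ j0
    · obtain ⟨i1, hi10⟩ := hex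
      refine ⟨i1, fun j => ?_⟩
      set u : n → (n × n) → ℂ := fun j' p => if j' = j then x p else B (i1, j') p with hudef
      have hON' : ∀ j1 j2, ∑ p, star (u j1 p) * u j2 p = (if j1 = j2 then (1 : ℂ) else 0) := by
        intro j1 j2
        have hform : ∀ j', u j' = fun p => B (if j' = j then (j0, j0) else (i1, j')) p := by
          intro j'
          funext p
          by_cases h' : j' = j <;> simp [hudef, h', hBx]
        rw [hform j1, hform j2, onb_sum B]
        by_cases h12 : j1 = j2
        · subst h12; simp
        · rw [if_neg h12]
          have hneq : (if j1 = j then ((j0, j0) : n × n) else (i1, j1))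
              ≠ (if j2 = j then ((j0, j0) : n × n) else (i1, j2)) := by
            by_cases h1 : j1 = j <;> by_cases h2 : j2 = j
            · exact absurd (h1.trans h2.symm) h12
            · rw [if_pos h1, if_neg h2]
              exact fun heq => hi10 (congrArg Prod.fst heq).symm
            · rw [if_neg h1, if_pos h2]
              exact fun heq => hi10 (congrArg Prod.fst heq)
            · rw [if_neg h1, if_neg h2]
              exact fun heq => h12 (congrArg Prod.snd heq)
          rw [if_neg hneq]
      have h1 := hK u hON'
      have h2 := hrow i1
      rw [← Finset.add_sum_erase _ _ (Finset.mem_univ j)] at h1 h2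
      have he : ∑ j' ∈ Finset.univ.erase j, Qform Δ (u j')
          = ∑ j' ∈ Finset.univ.erase j, Qform Δ (fun p => B (i1, j') p) := by
        refine Finset.sum_congr rfl fun j' hj' => ?_
        have : j' ≠ j := Finset.ne_of_mem_erase hj'
        congr 1
        funext p
        simp [hudef, this]
      have hx' : Qform Δ (u j) = Qform Δ x := by
        congr 1
        funext p
        simp [hudef]
      rw [he, hx'] at h1
      exact (add_right_cancel (h1.trans h2.symm)).symm
    · push_neg at hex
      refine ⟨j0, fun j => ?_⟩
      congr 1
      funext p
      rw [hex j, hBx p]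
  have hsum := hrow i1
  rw [Finset.sum_congr rfl fun j _ => hi1 j, Finset.sum_const, nsmul_eq_mul] at hsum
  have hcn : (Fintype.card n : ℂ) ≠ 0 := by
    exact_mod_cast Fintype.card_ne_zero
  simpa [Finset.card_univ, hcn] using hsum


lemma qform_zero_matrix (Δ : Matrix m m ℂ)
    (h : ∀ x : m → ℂ, (∑ p, star (x p) * x p = 1) → Qform Δ x = 0) : Δ = 0 := by
  set T : EuclideanSpace ℂ m →ₗ[ℂ] EuclideanSpace ℂ m := Matrix.toEuclideanLin Δ with hT
  have hTapp : ∀ (y : EuclideanSpace ℂ m) (p : m), T y p = ∑ q, Δ p q * y q := by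
    intro y p
    rfl
  have hinner : ∀ y : EuclideanSpace ℂ m, (inner ℂ y (T y) : ℂ) = Qform Δ y := by
    intro y
    rw [PiLp.inner_apply]
    simp only [RCLike.inner_apply]
    rw [Qform]
    refine Finset.sum_congr rfl fun a _ => ?_
    rw [hTapp y a, Finset.sum_mul]
    refine Finset.sum_congr rfl fun b _ => ?_
    rw [Complex.star_def]
    ring
  have hQ0 : ∀ y : EuclideanSpace ℂ m, Qform Δ y = 0 := by
    intro y
    by_cases hy : y = 0
    · subst hy
      simp [Qform]
    · have hny : ‖y‖ ≠ 0 := norm_ne_zero_iff.mpr hy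
      set c : ℝ := ‖y‖⁻¹ with hc
      have hcne : (c : ℂ) ≠ 0 := by
        simp [hc, Complex.ofReal_eq_zero, inv_eq_zero, hny]
      set x : EuclideanSpace ℂ m := (c : ℂ) • y with hxdef
      have hxa : ∀ p, x p = (c : ℂ) * y p := fun p => rfl
      have hyn : ∑ p, star (y p) * y p = ((‖y‖ : ℂ)) ^ 2 := by
        have h1 : (inner ℂ y y : ℂ) = ((‖y‖ : ℂ)) ^ 2 := inner_self_eq_norm_sq_to_K y
        rw [← h1, PiLp.inner_apply]
        simp only [RCLike.inner_apply]
        exact Finset.sum_congr rfl fun _ _ => mul_comm _ _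
      have hxunit : ∑ p, star (x p) * x p = 1 := by
        have : ∀ p, star (x p) * x p = (c : ℂ) ^ 2 * (star (y p) * y p) := by
          intro p
          rw [hxa p, star_mul']
          have : star ((c : ℂ)) = (c : ℂ) := by
            simp [Complex.star_def, Complex.conj_ofReal]
          rw [this]; ring
        rw [Finset.sum_congr rfl fun p _ => this p, ← Finset.mul_sum, hyn]
        rw [hc]
        push_cast
        field_simp
        exact div_self (Complex.ofReal_ne_zero.mpr hny)
      have hQx : Qform Δ x = (c : ℂ) ^ 2 * Qform Δ y := by
        rw [Qform, Qform, Finset.mul_sum]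
        refine Finset.sum_congr rfl fun a _ => ?_
        rw [Finset.mul_sum]
        refine Finset.sum_congr rfl fun b _ => ?_
        rw [hxa, hxa, star_mul']
        have : star ((c : ℂ)) = (c : ℂ) := by
          simp [Complex.star_def, Complex.conj_ofReal]
        rw [this]; ring
      have := h x hxunit
      rw [hQx] at this
      exact (mul_eq_zero.mp this).resolve_left (pow_ne_zero 2 hcne)
  have hT0 : T = 0 := by
    rw [← inner_map_self_eq_zero]
    intro y
    rw [← inner_conj_symm, hinner, hQ0]
    simp
  ext p q
  have h0 : T ((WithLp.equiv 2 _).symm (fun r => if r = q then (1 : ℂ) else 0)) = 0 := by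
    rw [hT0]; rfl
  have h1 : T ((WithLp.equiv 2 _).symm (fun r => if r = q then (1 : ℂ) else 0)) p
      = (0 : EuclideanSpace ℂ m) p := congrArg (fun z : EuclideanSpace ℂ m => z p) h0
  rw [hTapp] at h1
  simpa [Finset.sum_ite_eq'] using h1

end Stmt16Aux

/-- Distinct operators on `H ⊗ H` are separated by some `W†(|0⟩⟨0| ⊗ I_H)W` under the
trace pairing. -/
theorem stmt16 {n : Type*} [Fintype n] [DecidableEq n]
    (ψ : n → ℂ) (hψ : ∑ k, star (ψ k) * ψ k = 1)
    (ρ ρ' : Matrix (n × n) (n × n) ℂ) (hne : ρ ≠ ρ') :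
    ∃ W ∈ Matrix.unitaryGroup (n × n) ℂ,
      (ρ * (Wᴴ * (vecProj ψ ⊗ₖ (1 : Matrix n n ℂ)) * W)).trace ≠
      (ρ' * (Wᴴ * (vecProj ψ ⊗ₖ (1 : Matrix n n ℂ)) * W)).trace := by
  by_contra hcon
  push_neg at hcon
  have hD0 : ∀ W ∈ Matrix.unitaryGroup (n × n) ℂ,
      ((ρ - ρ') * (Wᴴ * (vecProj ψ ⊗ₖ (1 : Matrix n n ℂ)) * W)).trace = 0 := by
    intro W hW
    rw [Matrix.sub_mul, Matrix.trace_sub, sub_eq_zero]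
    exact hcon W hW
  cases isEmpty_or_nonempty n with
  | inl he =>
    exact hne (by ext p q; exact (he.false p.1).elim)
  | inr hne' =>
    have hK : ∀ u : n → (n × n) → ℂ,
        (∀ j j', ∑ p, star (u j p) * u j' p = (if j = j' then (1 : ℂ) else 0)) →
        ∑ k, Stmt16Aux.Qform (ρ - ρ') (u k) = 0 := fun u hu =>
      Stmt16Aux.key ψ hψ (ρ - ρ') hD0 (Classical.arbitrary n) u hu
    have hz := Stmt16Aux.qform_zero_matrix (ρ - ρ')
      (fun x hx => Stmt16Aux.qform_unit_zero (ρ - ρ') hK x hx)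
    exact hne (sub_eq_zero.mp hz)
end
end

section
/- Let [U, ε, E] and [U', ε', E'] be purified H-channels. Their second-level transformation matrices are equal, i.e., (I_{H⊗H} ⊗ ⟨ε|)U⁽²⁾(I_{H⊗H} ⊗ |ε⟩) = (I_{H⊗H} ⊗ ⟨ε'|)U'⁽²⁾(I_{H⊗H} ⊗ |ε'⟩), if and only if for every V ∈ L(H): (I_H ⊗ ⟨ε|) U (V ⊗ I_E) U (I_H ⊗ |ε⟩) = (I_H ⊗ ⟨ε'|) U' (V ⊗ I_{E'}) U' (I_H ⊗ |ε'⟩). -/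
open Matrix Kronecker BigOperators

noncomputable section

lemma swap_idT {n e : Type*} [Fintype n] [Fintype e] [DecidableEq n] [DecidableEq e]
    (U : Matrix (n × e) (n × e) ℂ) (p : n × n) (k l : n) (v t : e) :
    ((swapM n ⊗ₖ (1 : Matrix e e ℂ)) * idT U) (p,v) ((k,l),t) =
      if p.2 = k then U (p.1,v) (l,t) else 0 := by
  rw [Matrix.mul_apply]
  rw [Fintype.sum_prod_type]
  simp [swapM, idT, Matrix.kroneckerMap_apply, Matrix.one_apply, Fintype.sum_prod_type,
    Finset.sum_ite_eq, ite_and, eq_comm]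

lemma U2m_apply {n e : Type*} [Fintype n] [Fintype e] [DecidableEq n] [DecidableEq e]
    (U : Matrix (n × e) (n × e) ℂ) (i j k l : n) (s t : e) :
    U2m U ((i,j),s) ((k,l),t) = ∑ u, U (j,s) (k,u) * U (i,u) (l,t) := by
  rw [U2m, Matrix.mul_assoc, Matrix.mul_apply, Fintype.sum_prod_type]
  simp only [swap_idT]
  simp [idT, Fintype.sum_prod_type, Finset.sum_ite_eq, mul_ite, ite_mul, Finset.mul_sum]

def G {n e : Type*} [Fintype n] [Fintype e]
    (U : Matrix (n × e) (n × e) ℂ) (ε : e → ℂ) (k i j l : n) : ℂ :=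
  ∑ s, ∑ u, ∑ t, star (ε s) * U (j,s) (k,u) * U (i,u) (l,t) * ε t

lemma T2_apply {n e : Type*} [Fintype n] [Fintype e] [DecidableEq n] [DecidableEq e]
    (U : Matrix (n × e) (n × e) ℂ) (ε : e → ℂ) (i j k l : n) :
    T2 U ε (i,j) (k,l) = G U ε k i j l := by
  rw [T2]
  erw [Matrix.mul_apply, Fintype.sum_prod_type]
  simp only [Matrix.mul_apply, Fintype.sum_prod_type, Matrix.conjTranspose_apply, inj,
    Matrix.of_apply]
  simp only [Prod.mk.injEq, ite_and, apply_ite (star : ℂ → ℂ), star_zero, ite_mul, zero_mul,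
    mul_ite, mul_zero, Finset.sum_ite_eq, Finset.sum_ite_eq', Finset.mem_univ, if_true,
    Finset.sum_ite_irrel, Finset.sum_const_zero]
  simp only [U2m_apply, G, Finset.mul_sum, Finset.sum_mul, mul_assoc]
  rw [Finset.sum_comm]
  exact Finset.sum_congr rfl fun s _ => Finset.sum_comm

lemma cstar_mul_eq {l m o : Type*} [Fintype m] (A : Matrix l m ℂ) (B : Matrix m o ℂ) :
    @HMul.hMul (Matrix l m ℂ) (Matrix m o ℂ) (Matrix l o ℂ)
      CStarMatrix.instHMulOfFintypeOfMulOfAddCommMonoid A B =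
    @HMul.hMul (Matrix l m ℂ) (Matrix m o ℂ) (Matrix l o ℂ) Matrix.instHMulOfFintypeOfMulOfAddCommMonoid A B := rfl

lemma F_std {n e : Type*} [Fintype n] [Fintype e] [DecidableEq n] [DecidableEq e]
    (U : Matrix (n × e) (n × e) ℂ) (ε : e → ℂ) (k i j l : n) :
    (((inj (n := n) ε)ᴴ * U * (Matrix.single k i 1 ⊗ₖ (1 : Matrix e e ℂ)) * U * inj ε :
      Matrix n n ℂ)) j l = G U ε k i j l := by
  simp only [cstar_mul_eq]
  simp only [Matrix.mul_apply, Fintype.sum_prod_type, Matrix.conjTranspose_apply, inj,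
    Matrix.of_apply, Matrix.kroneckerMap_apply, Matrix.one_apply, Matrix.single, G]
  simp only [Prod.mk.injEq, ite_and, apply_ite (star : ℂ → ℂ), star_zero, ite_mul, zero_mul,
    mul_ite, mul_zero, mul_one, one_mul, Finset.sum_ite_eq, Finset.sum_ite_eq', Finset.mem_univ,
    if_true, Finset.sum_ite_irrel, Finset.sum_const_zero]
  simp only [Finset.mul_sum, Finset.sum_mul, mul_assoc]
  rw [Finset.sum_comm]
  exact (Finset.sum_congr rfl fun u _ => Finset.sum_comm).trans Finset.sum_comm

lemma kron_sum_left {n e : Type*} [Fintype n] {ι : Type*} (s : Finset ι)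
    (f : ι → Matrix n n ℂ) (B : Matrix e e ℂ) :
    (∑ x ∈ s, f x) ⊗ₖ B = ∑ x ∈ s, (f x ⊗ₖ B) := by
  ext p q
  simp [Matrix.kroneckerMap_apply, Matrix.sum_apply, Finset.sum_mul]

lemma F_decomp {n e : Type*} [Fintype n] [Fintype e] [DecidableEq n] [DecidableEq e]
    (M : Matrix n (n × e) ℂ) (N : Matrix (n × e) n ℂ) (V : Matrix n n ℂ) :
    M * (V ⊗ₖ (1 : Matrix e e ℂ)) * N =
      ∑ k, ∑ i, V k i • (M * (Matrix.single k i 1 ⊗ₖ (1 : Matrix e e ℂ)) * N) := by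
  conv_lhs => rw [Matrix.matrix_eq_sum_single V]
  have h1 : ∀ k i, Matrix.single k i (V k i) = V k i • Matrix.single k i (1 : ℂ) :=
    fun k i => by rw [Matrix.smul_single, smul_eq_mul, mul_one]
  simp only [h1, kron_sum_left, Matrix.smul_kronecker, Matrix.sum_mul, Matrix.mul_sum,
    Matrix.smul_mul, Matrix.mul_smul]

/-- Equality of second-level transformation matrices is equivalent to equality of all
`(I_H ⊗ ⟨ε|) U (V ⊗ I_E) U (I_H ⊗ |ε⟩)` for `V ∈ L(H)`. -/
theorem stmt17 {n e e' : Type*} [Fintype n] [DecidableEq n]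
    [Fintype e] [DecidableEq e] [Fintype e'] [DecidableEq e']
    (U : Matrix (n × e) (n × e) ℂ) (hU : U ∈ Matrix.unitaryGroup (n × e) ℂ)
    (ε : e → ℂ) (hε : ∑ k, star (ε k) * ε k = 1)
    (U' : Matrix (n × e') (n × e') ℂ) (hU' : U' ∈ Matrix.unitaryGroup (n × e') ℂ)
    (ε' : e' → ℂ) (hε' : ∑ k, star (ε' k) * ε' k = 1) :
    T2 U ε = T2 U' ε' ↔
      ∀ V : Matrix n n ℂ,
        (inj (n := n) ε)ᴴ * U * (V ⊗ₖ (1 : Matrix e e ℂ)) * U * inj ε =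
        (inj (n := n) ε')ᴴ * U' * (V ⊗ₖ (1 : Matrix e' e' ℂ)) * U' * inj ε' := by
  constructor
  · intro h V
    have hG : ∀ k i j l, G U ε k i j l = G U' ε' k i j l := fun k i j l => by
      rw [← T2_apply, ← T2_apply, h]
    erw [Matrix.mul_assoc ((inj ε)ᴴ * U * (V ⊗ₖ (1 : Matrix e e ℂ))) U (inj ε),
      Matrix.mul_assoc ((inj ε')ᴴ * U' * (V ⊗ₖ (1 : Matrix e' e' ℂ))) U' (inj ε'),
      F_decomp, F_decomp]
    refine Finset.sum_congr rfl fun k _ => Finset.sum_congr rfl fun i _ => ?_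
    congr 1
    ext j l
    erw [← Matrix.mul_assoc, ← Matrix.mul_assoc, F_std, F_std, hG]
  · intro h
    ext ⟨i, j⟩ ⟨k, l⟩
    erw [T2_apply, T2_apply, ← F_std, ← F_std, h]
    rfl
end
end
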